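/- arXiv:1906.10047 — 2 statements merged into one kernel-verified Lean document; each statement's English description precedes it below -/
import Mathlib

section
/- Let p, q be n-tuples of multivariate polynomials with all coefficients equal to 1 (abstract multi-polynomials, viewed as concrete polynomials via the canonical concretization γ). Then for every x ∈ ℕⁿ, γ(p)(γ(q)(x)) ≥ γ(α(γ(p) ∘ γ(q)))(x); i.e., concrete composition dominates the concretization of abstract composition pointwise. -/
open MvPolynomial

/-- The abstraction map `α`: replace every nonzero coefficient by `1`. -/
noncomputable def absP {n : ℕ} (p : MvPolynomial (Fin n) ℕ) : MvPolynomial (Fin n) ℕ :=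
  ∑ m ∈ p.support, monomial m 1

lemma eval_absP_le {n : ℕ} (f : MvPolynomial (Fin n) ℕ) (x : Fin n → ℕ) :
    eval x (absP f) ≤ eval x f := by
  rw [absP, map_sum, eval_eq x f]
  apply Finset.sum_le_sum
  intro m hm
  rw [eval_monomial, Finsupp.prod]
  have h1 : 1 ≤ f.coeff m := Nat.one_le_iff_ne_zero.mpr (mem_support_iff.mp hm)
  exact Nat.mul_le_mul_right _ h1

/-- For abstract multi-polynomials `p, q` (tuples of polynomials with all
coefficients `≤ 1`, regarded as concrete polynomials via `γ`),
concrete composition dominates, pointwise on ℕⁿ, the concretization of the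
abstract composition `α(γ(p) ∘ γ(q))`. -/
theorem stmt5 {n : ℕ} (p q : Fin n → MvPolynomial (Fin n) ℕ)
    (hp : ∀ i m, (p i).coeff m ≤ 1) (hq : ∀ i m, (q i).coeff m ≤ 1)
    (x : Fin n → ℕ) (i : Fin n) :
    eval x (absP (bind₁ q (p i))) ≤ eval (fun j => eval x (q j)) (p i) := by
  calc eval x (absP (bind₁ q (p i))) ≤ eval x (bind₁ q (p i)) := eval_absP_le _ _
    _ = eval (fun j => eval x (q j)) (p i) := by
        show eval₂Hom (RingHom.id ℕ) x _ = eval₂Hom (RingHom.id ℕ) _ _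
        rw [eval₂Hom_bind₁]; rfl
end

section
/- In a simple disjunctive loop using only multiplication (no addition), i.e., a finite set S of n-tuples of monic monomials in x₁,…,xₙ, the composition closure ⋃_{i≥0} S^{(i)} (with S^{(0)} = {Id} and S^{(i+1)} = S^{(i)} ∪ S ∘ S^{(i)}) is finite if and only if there is a polynomial bound B(x, t) on all values computable by t-step executions of the loop from state x. In particular, if all variables are polynomially bounded then the exponents occurring in the closure are bounded and the closure is a finite set. -/
open MvPolynomial

/-- A polynomial transition: an `n`-tuple of polynomials over ℕ. -/
abbrev MPn (n : ℕ) := Fin n → MvPolynomial (Fin n) ℕ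

/-- Apply a polynomial transition to a state. -/
noncomputable def applyMP {n : ℕ} (f : MPn n) (x : Fin n → ℕ) : Fin n → ℕ :=
  fun i => eval x (f i)

/-- Run an execution (a finite list of transitions) from an initial state. -/
noncomputable def runL {n : ℕ} (σ : List (MPn n)) (x : Fin n → ℕ) : Fin n → ℕ :=
  σ.foldl (fun s f => applyMP f s) x

/-- A tuple of monic monomials: every component is a monomial with coefficient 1. -/
def isMonicMonTuple {n : ℕ} (f : MPn n) : Prop :=
  ∀ i, ∃ m : Fin n →₀ ℕ, f i = monomial m 1

/-- The composition closure: `S^{(0)} = {Id}`,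
`S^{(k+1)} = S^{(k)} ∪ S ∘ S^{(k)}`. -/
def closSet {n : ℕ} (S : Set (MPn n)) : ℕ → Set (MPn n)
  | 0 => {fun i => X i}
  | k + 1 => closSet S k ∪
      {h | ∃ f ∈ S, ∃ g ∈ closSet S k, h = fun i => bind₁ g (f i)}

/-!
Every element of the composition closure is the transition of some execution, and conversely;
moreover the closure consists of tuples of monic monomials. If the closure is finite, its
finitely many polynomials are all bounded by `c * max(x) ^ D`. Conversely, if `B` bounds all
executions, a monomial `x^m` in the closure evaluated at `x = (2, …, 2, M, 2, …, 2)` gives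
`M ^ m j ≤ B(M, t) = O(M ^ deg B)` for all large `M`, so every exponent is at most `deg B`;
there are only finitely many tuples of monic monomials with bounded exponents.
-/

namespace MvPolynomial

variable {σ : Type*}

lemma eval_le_eval_of_le (p : MvPolynomial σ ℕ) {x y : σ → ℕ} (h : ∀ i, x i ≤ y i) :
    eval x p ≤ eval y p := by
  rw [eval_eq, eval_eq]
  gcongr with d _ i _
  exact h i

lemma eval_const_le_sum_coeff_mul_pow (p : MvPolynomial σ ℕ) {M : ℕ} (hM : 1 ≤ M) :
    eval (fun _ => M) p ≤ (∑ d ∈ p.support, coeff d p) * M ^ p.totalDegree := by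
  rw [eval_eq, Finset.sum_mul]
  gcongr with d hd
  calc ∏ i ∈ d.support, M ^ d i = M ^ d.sum (fun _ e => e) := by
        rw [Finsupp.sum, Finset.prod_pow_eq_pow_sum]
    _ ≤ M ^ p.totalDegree := Nat.pow_le_pow_right hM (le_totalDegree hd)

lemma eval_le_sum_coeff_mul_pow (p : MvPolynomial σ ℕ) {x : σ → ℕ} {M : ℕ} (hM : 1 ≤ M)
    (hx : ∀ i, x i ≤ M) :
    eval x p ≤ (∑ d ∈ p.support, coeff d p) * M ^ p.totalDegree :=
  (eval_le_eval_of_le p hx).trans (eval_const_le_sum_coeff_mul_pow p hM)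

lemma le_totalDegree_of_pow_le_eval (p : MvPolynomial σ ℕ) {e N : ℕ}
    (h : ∀ M, N ≤ M → M ^ e ≤ eval (fun _ => M) p) : e ≤ p.totalDegree := by
  by_contra! he
  set c := ∑ d ∈ p.support, coeff d p
  set M := N + c + 2
  have hM : 1 ≤ M := by omega
  have : M * M ^ p.totalDegree ≤ c * M ^ p.totalDegree :=
    calc M * M ^ p.totalDegree = M ^ (p.totalDegree + 1) := by ring
      _ ≤ M ^ e := Nat.pow_le_pow_right hM he
      _ ≤ eval (fun _ => M) p := h M (by omega)
      _ ≤ c * M ^ p.totalDegree := eval_const_le_sum_coeff_mul_pow p hM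
  have := Nat.le_of_mul_le_mul_right this (by positivity)
  omega

lemma pow_le_eval_monomial {m : σ →₀ ℕ} {x : σ → ℕ} (hx : ∀ i, 1 ≤ x i) (j : σ) :
    x j ^ m j ≤ eval x (monomial m 1) := by
  rw [eval_monomial, one_mul, Finsupp.prod]
  by_cases hj : j ∈ m.support
  · exact Finset.single_le_prod' (fun i _ => Nat.one_le_pow _ _ (hx i)) hj
  · rw [Finsupp.notMem_support_iff.mp hj, pow_zero]
    exact Finset.one_le_prod' fun i _ => Nat.one_le_pow _ _ (hx i)

lemma _root_.Set.Finite.exists_eval_le {P : Set (MvPolynomial σ ℕ)} (hP : P.Finite) :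
    ∃ c D : ℕ, ∀ p ∈ P, ∀ (x : σ → ℕ) (M : ℕ), 1 ≤ M → (∀ i, x i ≤ M) →
      eval x p ≤ c * M ^ D := by
  obtain ⟨c, hc⟩ := (hP.image fun p => ∑ d ∈ p.support, coeff d p).bddAbove
  obtain ⟨D, hD⟩ := (hP.image totalDegree).bddAbove
  refine ⟨c, D, fun p hp x M hM hx => ?_⟩
  calc eval x p ≤ (∑ d ∈ p.support, coeff d p) * M ^ p.totalDegree :=
        eval_le_sum_coeff_mul_pow p hM hx
    _ ≤ c * M ^ D := by
        gcongr
        exacts [hc ⟨p, hp, rfl⟩, hD ⟨p, hp, rfl⟩]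

lemma finite_setOf_forall_exists_monomial_le {ι : Type*} [Finite ι] [Finite σ] (R : Type*)
    [CommSemiring R] (D : ℕ) :
    {g : ι → MvPolynomial σ R | ∀ i, ∃ m : σ →₀ ℕ, g i = monomial m 1 ∧ ∀ j, m j ≤ D}.Finite := by
  have hexp : {m : σ →₀ ℕ | ∀ j, m j ≤ D}.Finite := by
    classical
    refine (Set.finite_Iic (Finsupp.equivFunOnFinite.symm fun _ => D)).subset fun m hm => ?_
    exact Finsupp.le_def.mpr hm
  refine (Set.Finite.pi' fun _ => hexp.image fun m => monomial m (1 : R)).subset ?_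
  rintro g hg i
  obtain ⟨m, hm, hle⟩ := hg i
  exact ⟨m, hle, hm.symm⟩

lemma le_totalDegree_of_eval_monomial_le [Fintype σ] [DecidableEq σ] {m : σ →₀ ℕ}
    {B : MvPolynomial (Fin 2) ℕ} {t : ℕ}
    (h : ∀ x : σ → ℕ, (∀ i, 2 ≤ x i) → eval x (monomial m 1) ≤ eval ![Finset.univ.sup x, t] B)
    (j : σ) : m j ≤ B.totalDegree := by
  refine le_totalDegree_of_pow_le_eval B (N := t + 2) fun M hM => ?_
  set x : σ → ℕ := Function.update (fun _ => 2) j M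
  have hx : ∀ i, 2 ≤ x i ∧ x i ≤ M := by
    intro i
    rcases eq_or_ne i j with rfl | hi
    · simp only [x, Function.update_self]; omega
    · simp only [x, Function.update_of_ne hi]; omega
  calc M ^ m j = x j ^ m j := by simp only [x, Function.update_self]
    _ ≤ eval x (monomial m 1) := pow_le_eval_monomial (fun i => by linarith [hx i]) j
    _ ≤ eval ![Finset.univ.sup x, t] B := h x fun i => (hx i).1
    _ ≤ eval (fun _ => M) B := by
        refine eval_le_eval_of_le B (Fin.forall_fin_two.mpr ⟨?_, ?_⟩)
        · exact Finset.sup_le fun i _ => (hx i).2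
        · simp only [Matrix.cons_val_one, Matrix.cons_val_fin_one]; omega

end MvPolynomial

section Closure

variable {n : ℕ}

lemma applyMP_bind₁ (f g : MPn n) (x : Fin n → ℕ) :
    applyMP (fun i => bind₁ g (f i)) x = applyMP f (applyMP g x) :=
  funext fun i => eval₂Hom_bind₁ (RingHom.id ℕ) x g (f i)

lemma runL_append_singleton (σ : List (MPn n)) (f : MPn n) (x : Fin n → ℕ) :
    runL (σ ++ [f]) x = applyMP f (runL σ x) := by
  simp only [runL, List.foldl_append, List.foldl_cons, List.foldl_nil]

lemma applyMP_X (x : Fin n → ℕ) : applyMP (fun i => X i) x = x :=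
  funext fun i => eval_X i

lemma exists_runL_eq_of_mem_closSet {S : Set (MPn n)} {k : ℕ} {g : MPn n}
    (hg : g ∈ closSet S k) :
    ∃ σ : List (MPn n), (∀ f ∈ σ, f ∈ S) ∧ ∀ x, runL σ x = applyMP g x := by
  induction k generalizing g with
  | zero =>
    obtain rfl : g = fun i => X i := hg
    exact ⟨[], by simp, fun x => (applyMP_X x).symm⟩
  | succ k ih =>
    rcases hg with hg | ⟨f, hf, g', hg', rfl⟩
    · exact ih hg
    · obtain ⟨σ, hσ, hrun⟩ := ih hg'
      refine ⟨σ ++ [f], ?_, fun x => ?_⟩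
      · simpa [or_imp, forall_and] using ⟨hσ, hf⟩
      · rw [runL_append_singleton, hrun, applyMP_bind₁]

lemma exists_mem_closSet_runL_eq {S : Set (MPn n)} {σ : List (MPn n)} (hσ : ∀ f ∈ σ, f ∈ S) :
    ∃ g ∈ closSet S σ.length, ∀ x, runL σ x = applyMP g x := by
  induction σ using List.reverseRecOn with
  | nil => exact ⟨fun i => X i, rfl, fun x => (applyMP_X x).symm⟩
  | append_singleton σ f ih =>
    obtain ⟨g, hg, hrun⟩ := ih fun f' hf' => hσ f' (List.mem_append_left _ hf')
    refine ⟨fun i => bind₁ g (f i), ?_, fun x => ?_⟩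
    · rw [List.length_append, List.length_singleton]
      exact Or.inr ⟨f, hσ f (by simp), g, hg, rfl⟩
    · rw [runL_append_singleton, hrun, applyMP_bind₁]

lemma isMonicMonTuple_X : isMonicMonTuple (fun i => X i : MPn n) :=
  fun i => ⟨Finsupp.single i 1, rfl⟩

lemma isMonicMonTuple.bind₁ {f g : MPn n} (hf : isMonicMonTuple f) (hg : isMonicMonTuple g) :
    isMonicMonTuple fun i => bind₁ g (f i) := by
  choose m hm using hg
  intro i
  obtain ⟨d, hd⟩ := hf i
  refine ⟨∑ j ∈ d.support, d j • m j, ?_⟩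
  simp only [hd, bind₁_monomial, map_one, one_mul, hm, monomial_pow, one_pow, monomial_sum_one]

lemma isMonicMonTuple_of_mem_closSet {S : Set (MPn n)} (hS : ∀ f ∈ S, isMonicMonTuple f)
    {k : ℕ} {g : MPn n} (hg : g ∈ closSet S k) : isMonicMonTuple g := by
  induction k generalizing g with
  | zero =>
    obtain rfl : g = fun i => X i := hg
    exact isMonicMonTuple_X
  | succ k ih =>
    rcases hg with hg | ⟨f, hf, g', hg', rfl⟩
    · exact ih hg
    · exact (hS f hf).bind₁ (ih hg')

end Closure

theorem stmt18_general {n : ℕ} (S : Set (MPn n))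
    (hmon : ∀ f ∈ S, isMonicMonTuple f) :
    (⋃ k, closSet S k).Finite ↔
      ∃ B : MvPolynomial (Fin 2) ℕ, ∀ σ : List (MPn n), (∀ f ∈ σ, f ∈ S) →
        ∀ x : Fin n → ℕ, (∀ i, 2 ≤ x i) →
          ∀ i, runL σ x i ≤ eval ![Finset.univ.sup x, σ.length] B := by
  constructor
  · intro hU
    obtain ⟨c, D, hbound⟩ :=
      (Set.finite_iUnion fun i => hU.image fun g : MPn n => g i).exists_eval_le
    refine ⟨C c * X 0 ^ D, fun σ hσ x hx i => ?_⟩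
    obtain ⟨g, hg, hrun⟩ := exists_mem_closSet_runL_eq hσ
    have hgU : g i ∈ ⋃ i, (fun g : MPn n => g i) '' ⋃ k, closSet S k :=
      Set.mem_iUnion.mpr ⟨i, g, Set.mem_iUnion.mpr ⟨σ.length, hg⟩, rfl⟩
    have hM : 1 ≤ Finset.univ.sup x := by
      linarith [hx i, Finset.le_sup (f := x) (Finset.mem_univ i)]
    simpa only [hrun, applyMP, eval_mul, eval_C, eval_pow, eval_X, Matrix.cons_val_zero] using
      hbound (g i) hgU x _ hM fun j => Finset.le_sup (Finset.mem_univ j)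
  · rintro ⟨B, hB⟩
    refine (finite_setOf_forall_exists_monomial_le ℕ B.totalDegree).subset ?_
    intro g hg i
    obtain ⟨k, hgk⟩ := Set.mem_iUnion.mp hg
    obtain ⟨m, hm⟩ := isMonicMonTuple_of_mem_closSet hmon hgk i
    obtain ⟨σ, hσ, hrun⟩ := exists_runL_eq_of_mem_closSet hgk
    refine ⟨m, hm, le_totalDegree_of_eval_monomial_le (t := σ.length) fun x hx => ?_⟩
    simpa only [hrun, applyMP, hm] using hB σ hσ x hx i

/-- For a purely multiplicative simple disjunctive loop (a finite set of tuples
of monic monomials), the composition closure is finite if and only if there is a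
polynomial `B(x,t)` bounding all values computable by `t`-step executions from
states with all entries ≥ 2 in terms of `max(x)` and `t`. -/
theorem stmt18 {n : ℕ} (S : Set (MPn n)) (hfin : S.Finite)
    (hmon : ∀ f ∈ S, isMonicMonTuple f) :
    (⋃ k, closSet S k).Finite ↔
      ∃ B : MvPolynomial (Fin 2) ℕ, ∀ σ : List (MPn n), (∀ f ∈ σ, f ∈ S) →
        ∀ x : Fin n → ℕ, (∀ i, 2 ≤ x i) →
          ∀ i, runL σ x i ≤ eval ![Finset.univ.sup x, σ.length] B :=
  stmt18_general S hmon
end
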